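/- arXiv:2212.08937 — 7 statements merged into one kernel-verified Lean document; each statement's English description precedes it below -/
import Mathlib

section
/- Let (X, μ) and (Y, ν) be sigma-finite measure spaces, let 1 ≤ a < b ≤ ∞ and 1 ≤ c < d ≤ ∞, let ψ be a generating function on (a,b) and χ a generating function on (c,d). Let f : X → ℝ and u : Y → ℝ be measurable, let t > 0 and C ≥ 0, and suppose that for every q ∈ (a,b) and every p ∈ (c,d) one has ‖u‖_{L^p(ν)} ≤ C · t^{1/p − 1/q} · ‖f‖_{L^q(μ)}. Then φ[Gψ](t) · ‖u‖_{Gχ} ≤ C · φ[Gχ](t) · ‖f‖_{Gψ}, where all suprema are taken in [0,∞]. -/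
open MeasureTheory Set ENNReal

/-- Let `(X, μ)` and `(Y, ν)` be sigma-finite measure spaces,
`1 ≤ a < b ≤ ∞`, `1 ≤ c < d ≤ ∞`, `ψ` a generating function on `(a,b)`
(measurable, strictly positive, with positive infimum, encoded by a lower bound `εψ > 0`),
`χ` a generating function on `(c,d)`. If for all `q ∈ (a,b)`, `p ∈ (c,d)` one has
`‖u‖_{L^p(ν)} ≤ C · t^{1/p - 1/q} · ‖f‖_{L^q(μ)}`, then
`φ[Gψ](t) · ‖u‖_{Gχ} ≤ C · φ[Gχ](t) · ‖f‖_{Gψ}`, all suprema taken in `[0,∞]`. -/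
theorem grand_lebesgue_fundamental_function_estimate
    {X Y : Type*} [MeasurableSpace X] [MeasurableSpace Y]
    (μ : Measure X) (ν : Measure Y) [SigmaFinite μ] [SigmaFinite ν]
    (a b c d : ℝ≥0∞) (ha : 1 ≤ a) (hab : a < b) (hc : 1 ≤ c) (hcd : c < d)
    (ψ χ : ℝ≥0∞ → ℝ) (hψmeas : Measurable ψ) (hχmeas : Measurable χ)
    (εψ : ℝ) (hεψ : 0 < εψ) (hψlb : ∀ q ∈ Ioo a b, εψ ≤ ψ q)
    (εχ : ℝ) (hεχ : 0 < εχ) (hχlb : ∀ p ∈ Ioo c d, εχ ≤ χ p)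
    (f : X → ℝ) (u : Y → ℝ) (hf : Measurable f) (hu : Measurable u)
    (t : ℝ) (ht : 0 < t) (C : ℝ) (hC : 0 ≤ C)
    (h : ∀ q ∈ Ioo a b, ∀ p ∈ Ioo c d,
      eLpNorm u p ν ≤
        ENNReal.ofReal C * ENNReal.ofReal (t ^ (1 / p.toReal - 1 / q.toReal)) *
          eLpNorm f q μ) :
    (⨆ q ∈ Ioo a b, ENNReal.ofReal (t ^ (1 / q.toReal)) / ENNReal.ofReal (ψ q)) *
        (⨆ p ∈ Ioo c d, eLpNorm u p ν / ENNReal.ofReal (χ p)) ≤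
      ENNReal.ofReal C *
        (⨆ p ∈ Ioo c d, ENNReal.ofReal (t ^ (1 / p.toReal)) / ENNReal.ofReal (χ p)) *
        (⨆ q ∈ Ioo a b, eLpNorm f q μ / ENNReal.ofReal (ψ q)) := by
  rw [ENNReal.iSup_mul]
  refine iSup_le fun q => ?_
  rw [ENNReal.iSup_mul]
  refine iSup_le fun hq => ?_
  rw [ENNReal.mul_iSup]
  refine iSup_le fun p => ?_
  rw [ENNReal.mul_iSup]
  refine iSup_le fun hp => ?_
  have hrt : ENNReal.ofReal (t ^ (1 / q.toReal)) *
      ENNReal.ofReal (t ^ (1 / p.toReal - 1 / q.toReal)) =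
      ENNReal.ofReal (t ^ (1 / p.toReal)) := by
    rw [← ENNReal.ofReal_mul (by positivity), ← Real.rpow_add ht]
    ring_nf
  calc ENNReal.ofReal (t ^ (1 / q.toReal)) / ENNReal.ofReal (ψ q) *
        (eLpNorm u p ν / ENNReal.ofReal (χ p))
      ≤ ENNReal.ofReal (t ^ (1 / q.toReal)) / ENNReal.ofReal (ψ q) *
        ((ENNReal.ofReal C * ENNReal.ofReal (t ^ (1 / p.toReal - 1 / q.toReal)) *
          eLpNorm f q μ) / ENNReal.ofReal (χ p)) := by
        gcongr
        exact h q hq p hp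
    _ = (ENNReal.ofReal (t ^ (1 / q.toReal)) *
          ENNReal.ofReal (t ^ (1 / p.toReal - 1 / q.toReal))) *
        (ENNReal.ofReal C * eLpNorm f q μ * (ENNReal.ofReal (ψ q))⁻¹ *
          (ENNReal.ofReal (χ p))⁻¹) := by
        simp only [div_eq_mul_inv]; ring
    _ = ENNReal.ofReal C *
        (ENNReal.ofReal (t ^ (1 / p.toReal)) / ENNReal.ofReal (χ p)) *
        (eLpNorm f q μ / ENNReal.ofReal (ψ q)) := by
        rw [hrt]; simp only [div_eq_mul_inv]; ring
    _ ≤ _ := by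
        gcongr
        · exact le_iSup₂ (f := fun p' (_ : p' ∈ Ioo c d) =>
            ENNReal.ofReal (t ^ (1 / p'.toReal)) / ENNReal.ofReal (χ p')) p hp
        · exact le_iSup₂ (f := fun q' (_ : q' ∈ Ioo a b) =>
            eLpNorm f q' μ / ENNReal.ofReal (ψ q')) q hq
end

section
/- Let (X, μ) and (Y, ν) be sigma-finite measure spaces, let 1 ≤ a < b ≤ ∞ and 1 ≤ c < d ≤ ∞, let ψ be a generating function on (a,b) and χ a generating function on (c,d). Let f : X → ℝ and u : Y → ℝ be measurable, let t > 0 and C ≥ 0, and suppose that for every q ∈ (a,b) and every p ∈ (c,d) one has ‖u‖_{L^p(ν)} ≤ C · t^{1/p − 1/q} · ‖f‖_{L^q(μ)}. Assume moreover that the fundamental functions satisfy 0 < φ[Gψ](t) < ∞ and 0 < φ[Gχ](t) < ∞. Then ‖u‖_{Gχ} / φ[Gχ](t) ≤ C · ‖f‖_{Gψ} / φ[Gψ](t), where the Grand Lebesgue norms are taken in [0,∞]. -/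
open MeasureTheory Set ENNReal

/-- Under the hypotheses of Statement 0, assuming moreover that
the fundamental functions `φ[Gψ](t)` and `φ[Gχ](t)` are positive and finite, one has
`‖u‖_{Gχ} / φ[Gχ](t) ≤ C · ‖f‖_{Gψ} / φ[Gψ](t)` (the Grand Lebesgue norms taken in `[0,∞]`). -/
theorem grand_lebesgue_fundamental_function_estimate_div
    {X Y : Type*} [MeasurableSpace X] [MeasurableSpace Y]
    (μ : Measure X) (ν : Measure Y) [SigmaFinite μ] [SigmaFinite ν]
    (a b c d : ℝ≥0∞) (ha : 1 ≤ a) (hab : a < b) (hc : 1 ≤ c) (hcd : c < d)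
    (ψ χ : ℝ≥0∞ → ℝ) (hψmeas : Measurable ψ) (hχmeas : Measurable χ)
    (εψ : ℝ) (hεψ : 0 < εψ) (hψlb : ∀ q ∈ Ioo a b, εψ ≤ ψ q)
    (εχ : ℝ) (hεχ : 0 < εχ) (hχlb : ∀ p ∈ Ioo c d, εχ ≤ χ p)
    (f : X → ℝ) (u : Y → ℝ) (hf : Measurable f) (hu : Measurable u)
    (t : ℝ) (ht : 0 < t) (C : ℝ) (hC : 0 ≤ C)
    (h : ∀ q ∈ Ioo a b, ∀ p ∈ Ioo c d,
      eLpNorm u p ν ≤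
        ENNReal.ofReal C * ENNReal.ofReal (t ^ (1 / p.toReal - 1 / q.toReal)) *
          eLpNorm f q μ)
    (hφψ_pos : 0 < ⨆ q ∈ Ioo a b, ENNReal.ofReal (t ^ (1 / q.toReal)) / ENNReal.ofReal (ψ q))
    (hφψ_fin : (⨆ q ∈ Ioo a b, ENNReal.ofReal (t ^ (1 / q.toReal)) / ENNReal.ofReal (ψ q)) < ∞)
    (hφχ_pos : 0 < ⨆ p ∈ Ioo c d, ENNReal.ofReal (t ^ (1 / p.toReal)) / ENNReal.ofReal (χ p))
    (hφχ_fin : (⨆ p ∈ Ioo c d, ENNReal.ofReal (t ^ (1 / p.toReal)) / ENNReal.ofReal (χ p)) < ∞) :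
    (⨆ p ∈ Ioo c d, eLpNorm u p ν / ENNReal.ofReal (χ p)) /
        (⨆ p ∈ Ioo c d, ENNReal.ofReal (t ^ (1 / p.toReal)) / ENNReal.ofReal (χ p)) ≤
      ENNReal.ofReal C *
        ((⨆ q ∈ Ioo a b, eLpNorm f q μ / ENNReal.ofReal (ψ q)) /
          (⨆ q ∈ Ioo a b, ENNReal.ofReal (t ^ (1 / q.toReal)) / ENNReal.ofReal (ψ q))) := by
  set Φψ := ⨆ q ∈ Ioo a b, ENNReal.ofReal (t ^ (1 / q.toReal)) / ENNReal.ofReal (ψ q) with hΦψ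
  set Φχ := ⨆ p ∈ Ioo c d, ENNReal.ofReal (t ^ (1 / p.toReal)) / ENNReal.ofReal (χ p) with hΦχ
  set Nf := ⨆ q ∈ Ioo a b, eLpNorm f q μ / ENNReal.ofReal (ψ q) with hNf
  set Nu := ⨆ p ∈ Ioo c d, eLpNorm u p ν / ENNReal.ofReal (χ p) with hNu
  have key : ∀ p ∈ Ioo c d, ∀ q ∈ Ioo a b,
      (eLpNorm u p ν / ENNReal.ofReal (χ p)) *
        (ENNReal.ofReal (t ^ (1 / q.toReal)) / ENNReal.ofReal (ψ q)) ≤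
      ENNReal.ofReal C * ((eLpNorm f q μ / ENNReal.ofReal (ψ q)) *
        (ENNReal.ofReal (t ^ (1 / p.toReal)) / ENNReal.ofReal (χ p))) := by
    intro p hp q hq
    have h1 := h q hq p hp
    have h2 : eLpNorm u p ν * ENNReal.ofReal (t ^ (1 / q.toReal)) ≤
        ENNReal.ofReal C * ENNReal.ofReal (t ^ (1 / p.toReal)) * eLpNorm f q μ := by
      calc eLpNorm u p ν * ENNReal.ofReal (t ^ (1 / q.toReal))
          ≤ (ENNReal.ofReal C * ENNReal.ofReal (t ^ (1 / p.toReal - 1 / q.toReal)) *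
              eLpNorm f q μ) * ENNReal.ofReal (t ^ (1 / q.toReal)) := mul_le_mul_left h1 _
        _ = ENNReal.ofReal C *
              (ENNReal.ofReal (t ^ (1 / p.toReal - 1 / q.toReal)) *
                ENNReal.ofReal (t ^ (1 / q.toReal))) * eLpNorm f q μ := by ring
        _ = ENNReal.ofReal C * ENNReal.ofReal (t ^ (1 / p.toReal)) * eLpNorm f q μ := by
              rw [← ENNReal.ofReal_mul (le_of_lt (Real.rpow_pos_of_pos ht _)),
                ← Real.rpow_add ht, sub_add_cancel]
    calc (eLpNorm u p ν / ENNReal.ofReal (χ p)) *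
          (ENNReal.ofReal (t ^ (1 / q.toReal)) / ENNReal.ofReal (ψ q))
        = (eLpNorm u p ν * ENNReal.ofReal (t ^ (1 / q.toReal))) *
            ((ENNReal.ofReal (χ p))⁻¹ * (ENNReal.ofReal (ψ q))⁻¹) := by
          simp only [div_eq_mul_inv]; ring
      _ ≤ (ENNReal.ofReal C * ENNReal.ofReal (t ^ (1 / p.toReal)) * eLpNorm f q μ) *
            ((ENNReal.ofReal (χ p))⁻¹ * (ENNReal.ofReal (ψ q))⁻¹) := mul_le_mul_left h2 _
      _ = ENNReal.ofReal C * ((eLpNorm f q μ / ENNReal.ofReal (ψ q)) *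
            (ENNReal.ofReal (t ^ (1 / p.toReal)) / ENNReal.ofReal (χ p))) := by
          simp only [div_eq_mul_inv]; ring
  have main : Nu * Φψ ≤ ENNReal.ofReal C * (Nf * Φχ) := by
    rw [hNu, ENNReal.iSup_mul]
    refine iSup_le fun p => ?_
    rw [ENNReal.iSup_mul]
    refine iSup_le fun hp => ?_
    rw [hΦψ, ENNReal.mul_iSup]
    refine iSup_le fun q => ?_
    rw [ENNReal.mul_iSup]
    refine iSup_le fun hq => ?_
    refine le_trans (key p hp q hq) ?_
    refine mul_le_mul_right (mul_le_mul' ?_ ?_) _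
    · exact le_iSup₂ (f := fun q (_ : q ∈ Ioo a b) => eLpNorm f q μ / ENNReal.ofReal (ψ q)) q hq
    · exact le_iSup₂ (f := fun p (_ : p ∈ Ioo c d) =>
        ENNReal.ofReal (t ^ (1 / p.toReal)) / ENNReal.ofReal (χ p)) p hp
  rw [ENNReal.div_le_iff_le_mul (Or.inl hφχ_pos.ne') (Or.inl hφχ_fin.ne)]
  calc Nu ≤ ENNReal.ofReal C * (Nf * Φχ) / Φψ :=
        (ENNReal.le_div_iff_mul_le (Or.inl hφψ_pos.ne') (Or.inl hφψ_fin.ne)).mpr main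
    _ = ENNReal.ofReal C * (Nf / Φψ) * Φχ := by simp only [div_eq_mul_inv]; ring
end

section
/- Let (X, μ) and (Y, ν) be sigma-finite measure spaces, let 1 ≤ a < b ≤ ∞ and 1 ≤ c < d ≤ ∞, and let ψ be a generating function on (a,b). Let f : X → ℝ and u : Y → ℝ be measurable, let t > 0 and C ≥ 0, and suppose that for every q ∈ (a,b) and every p ∈ (c,d) one has ‖u‖_{L^p(ν)} ≤ C · t^{1/p − 1/q} · ‖f‖_{L^q(μ)}. Then for every p ∈ (c,d): φ[Gψ](t) · ‖u‖_{L^p(ν)} ≤ C · t^{1/p} · ‖f‖_{Gψ}, where the supremum defining φ[Gψ](t) and ‖f‖_{Gψ} is taken in [0,∞]. -/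
open MeasureTheory Set ENNReal

/-- Under the hypotheses of Statement 0 (only the generating function `ψ`
on `(a,b)` being needed), for every `p ∈ (c,d)` one has
`φ[Gψ](t) · ‖u‖_{L^p(ν)} ≤ C · t^{1/p} · ‖f‖_{Gψ}`, the suprema taken in `[0,∞]`. -/
theorem grand_lebesgue_pointwise_exponent_estimate
    {X Y : Type*} [MeasurableSpace X] [MeasurableSpace Y]
    (μ : Measure X) (ν : Measure Y) [SigmaFinite μ] [SigmaFinite ν]
    (a b c d : ℝ≥0∞) (ha : 1 ≤ a) (hab : a < b) (hc : 1 ≤ c) (hcd : c < d)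
    (ψ : ℝ≥0∞ → ℝ) (hψmeas : Measurable ψ)
    (εψ : ℝ) (hεψ : 0 < εψ) (hψlb : ∀ q ∈ Ioo a b, εψ ≤ ψ q)
    (f : X → ℝ) (u : Y → ℝ) (hf : Measurable f) (hu : Measurable u)
    (t : ℝ) (ht : 0 < t) (C : ℝ) (hC : 0 ≤ C)
    (h : ∀ q ∈ Ioo a b, ∀ p ∈ Ioo c d,
      eLpNorm u p ν ≤
        ENNReal.ofReal C * ENNReal.ofReal (t ^ (1 / p.toReal - 1 / q.toReal)) *
          eLpNorm f q μ) :
    ∀ p ∈ Ioo c d,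
      (⨆ q ∈ Ioo a b, ENNReal.ofReal (t ^ (1 / q.toReal)) / ENNReal.ofReal (ψ q)) *
          eLpNorm u p ν ≤
        ENNReal.ofReal C * ENNReal.ofReal (t ^ (1 / p.toReal)) *
          (⨆ q ∈ Ioo a b, eLpNorm f q μ / ENNReal.ofReal (ψ q)) := by
  intro p hp
  rw [ENNReal.iSup_mul]
  refine iSup_le fun q => ?_
  rw [ENNReal.iSup_mul]
  refine iSup_le fun hq => ?_
  calc ENNReal.ofReal (t ^ (1 / q.toReal)) / ENNReal.ofReal (ψ q) * eLpNorm u p ν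
      ≤ ENNReal.ofReal (t ^ (1 / q.toReal)) / ENNReal.ofReal (ψ q) *
        (ENNReal.ofReal C * ENNReal.ofReal (t ^ (1 / p.toReal - 1 / q.toReal)) *
          eLpNorm f q μ) := by
        gcongr
        exact h q hq p hp
    _ = ENNReal.ofReal C *
        (ENNReal.ofReal (t ^ (1 / q.toReal)) * ENNReal.ofReal (t ^ (1 / p.toReal - 1 / q.toReal))) *
        (eLpNorm f q μ / ENNReal.ofReal (ψ q)) := by
        simp only [div_eq_mul_inv]; ring
    _ = ENNReal.ofReal C * ENNReal.ofReal (t ^ (1 / p.toReal)) *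
        (eLpNorm f q μ / ENNReal.ofReal (ψ q)) := by
        rw [← ENNReal.ofReal_mul (Real.rpow_pos_of_pos ht _).le, ← Real.rpow_add ht]
        ring_nf
    _ ≤ _ := by
        gcongr
        exact le_iSup₂ (f := fun q (_ : q ∈ Ioo a b) => eLpNorm f q μ / ENNReal.ofReal (ψ q)) q hq
end

section
/- Let (X, μ) and (Y, ν) be sigma-finite measure spaces, let 1 ≤ a < b ≤ ∞ and 1 ≤ c < d ≤ ∞. Let N_X : ((a,b) → [0,∞]) → [0,∞] and N_Y : ((c,d) → [0,∞]) → [0,∞] be functionals that are monotone (g ≤ h pointwise implies N(g) ≤ N(h)) and positively homogeneous (N(λ·g) = λ·N(g) for every λ ∈ [0,∞]). Let f : X → ℝ and u : Y → ℝ be measurable, let t > 0 and C ≥ 0, and suppose that for every q ∈ (a,b) and every p ∈ (c,d) one has ‖u‖_{L^p(ν)} ≤ C · t^{1/p − 1/q} · ‖f‖_{L^q(μ)}. Then ⟨u⟩_Y · κ_X(t) ≤ C · ⟨f⟩_X · κ_Y(t), where ⟨f⟩_X := N_X(q ↦ ‖f‖_{L^q(μ)}), ⟨u⟩_Y := N_Y(p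 ↦ ‖u‖_{L^p(ν)}), κ_X(t) := N_X(q ↦ t^{1/q}) and κ_Y(t) := N_Y(p ↦ t^{1/p}). -/
open MeasureTheory Set ENNReal

/-- Let `N_X`, `N_Y` be monotone and positively homogeneous functionals
on the nonnegative functions defined on `(a,b)` resp. `(c,d)` (modelling m.r.i. norms).
If `‖u‖_{L^p(ν)} ≤ C · t^{1/p - 1/q} · ‖f‖_{L^q(μ)}` for all `q ∈ (a,b)`, `p ∈ (c,d)`, then
`⟨u⟩_Y · κ_X(t) ≤ C · ⟨f⟩_X · κ_Y(t)`. -/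
theorem mri_fundamental_function_estimate
    {X Y : Type*} [MeasurableSpace X] [MeasurableSpace Y]
    (μ : Measure X) (ν : Measure Y) [SigmaFinite μ] [SigmaFinite ν]
    (a b c d : ℝ≥0∞) (ha : 1 ≤ a) (hab : a < b) (hc : 1 ≤ c) (hcd : c < d)
    (NX : (Ioo a b → ℝ≥0∞) → ℝ≥0∞) (NY : (Ioo c d → ℝ≥0∞) → ℝ≥0∞)
    (hNXmono : ∀ g h : Ioo a b → ℝ≥0∞, (∀ q, g q ≤ h q) → NX g ≤ NX h)
    (hNYmono : ∀ g h : Ioo c d → ℝ≥0∞, (∀ p, g p ≤ h p) → NY g ≤ NY h)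
    (hNXhom : ∀ (lam : ℝ≥0∞) (g : Ioo a b → ℝ≥0∞), NX (fun q => lam * g q) = lam * NX g)
    (hNYhom : ∀ (lam : ℝ≥0∞) (g : Ioo c d → ℝ≥0∞), NY (fun p => lam * g p) = lam * NY g)
    (f : X → ℝ) (u : Y → ℝ) (hf : Measurable f) (hu : Measurable u)
    (t : ℝ) (ht : 0 < t) (C : ℝ) (hC : 0 ≤ C)
    (h : ∀ q ∈ Ioo a b, ∀ p ∈ Ioo c d,
      eLpNorm u p ν ≤
        ENNReal.ofReal C * ENNReal.ofReal (t ^ (1 / p.toReal - 1 / q.toReal)) *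
          eLpNorm f q μ) :
    NY (fun p => eLpNorm u (p : ℝ≥0∞) ν) *
        NX (fun q => ENNReal.ofReal (t ^ (1 / (q : ℝ≥0∞).toReal))) ≤
      ENNReal.ofReal C * NX (fun q => eLpNorm f (q : ℝ≥0∞) μ) *
        NY (fun p => ENNReal.ofReal (t ^ (1 / (p : ℝ≥0∞).toReal))) := by
  set KX := NX (fun q => ENNReal.ofReal (t ^ (1 / (q : ℝ≥0∞).toReal))) with hKXdef
  set NXf := NX (fun q => eLpNorm f (q : ℝ≥0∞) μ) with hNXfdef
  have key : ∀ p : Ioo c d, eLpNorm u (p : ℝ≥0∞) ν * KX ≤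
      (ENNReal.ofReal C * NXf) * ENNReal.ofReal (t ^ (1 / (p : ℝ≥0∞).toReal)) := by
    intro p
    have h1 : ∀ q : Ioo a b,
        eLpNorm u (p : ℝ≥0∞) ν * ENNReal.ofReal (t ^ (1 / (q : ℝ≥0∞).toReal)) ≤
        (ENNReal.ofReal C * ENNReal.ofReal (t ^ (1 / (p : ℝ≥0∞).toReal))) *
          eLpNorm f (q : ℝ≥0∞) μ := by
      intro q
      have hq := h q q.2 p p.2
      have e : ENNReal.ofReal (t ^ (1 / (p : ℝ≥0∞).toReal - 1 / (q : ℝ≥0∞).toReal)) *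
          ENNReal.ofReal (t ^ (1 / (q : ℝ≥0∞).toReal)) =
          ENNReal.ofReal (t ^ (1 / (p : ℝ≥0∞).toReal)) := by
        rw [← ENNReal.ofReal_mul (le_of_lt (Real.rpow_pos_of_pos ht _)),
          ← Real.rpow_add ht]
        congr 1
        ring
      calc eLpNorm u (p : ℝ≥0∞) ν * ENNReal.ofReal (t ^ (1 / (q : ℝ≥0∞).toReal))
          ≤ (ENNReal.ofReal C *
              ENNReal.ofReal (t ^ (1 / (p : ℝ≥0∞).toReal - 1 / (q : ℝ≥0∞).toReal)) *
              eLpNorm f (q : ℝ≥0∞) μ) * ENNReal.ofReal (t ^ (1 / (q : ℝ≥0∞).toReal)) :=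
            mul_le_mul_left hq _
        _ = (ENNReal.ofReal C *
              (ENNReal.ofReal (t ^ (1 / (p : ℝ≥0∞).toReal - 1 / (q : ℝ≥0∞).toReal)) *
                ENNReal.ofReal (t ^ (1 / (q : ℝ≥0∞).toReal)))) * eLpNorm f (q : ℝ≥0∞) μ := by
            ring
        _ = (ENNReal.ofReal C * ENNReal.ofReal (t ^ (1 / (p : ℝ≥0∞).toReal))) *
              eLpNorm f (q : ℝ≥0∞) μ := by rw [e]
    calc eLpNorm u (p : ℝ≥0∞) ν * KX
        = NX (fun q => eLpNorm u (p : ℝ≥0∞) ν *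
            ENNReal.ofReal (t ^ (1 / (q : ℝ≥0∞).toReal))) := (hNXhom _ _).symm
      _ ≤ NX (fun q => (ENNReal.ofReal C * ENNReal.ofReal (t ^ (1 / (p : ℝ≥0∞).toReal))) *
            eLpNorm f (q : ℝ≥0∞) μ) := hNXmono _ _ h1
      _ = (ENNReal.ofReal C * ENNReal.ofReal (t ^ (1 / (p : ℝ≥0∞).toReal))) * NXf :=
            hNXhom _ _
      _ = (ENNReal.ofReal C * NXf) * ENNReal.ofReal (t ^ (1 / (p : ℝ≥0∞).toReal)) := by
            ring
  calc NY (fun p => eLpNorm u (p : ℝ≥0∞) ν) * KX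
      = KX * NY (fun p => eLpNorm u (p : ℝ≥0∞) ν) := mul_comm _ _
    _ = NY (fun p => KX * eLpNorm u (p : ℝ≥0∞) ν) := (hNYhom _ _).symm
    _ ≤ NY (fun p => (ENNReal.ofReal C * NXf) *
          ENNReal.ofReal (t ^ (1 / (p : ℝ≥0∞).toReal))) :=
        hNYmono _ _ fun p => by rw [mul_comm]; exact key p
    _ = (ENNReal.ofReal C * NXf) *
          NY (fun p => ENNReal.ofReal (t ^ (1 / (p : ℝ≥0∞).toReal))) := hNYhom _ _
end

section
/- Let (X, μ) and (Y, ν) be sigma-finite measure spaces, let 1 ≤ a < b ≤ ∞ and 1 ≤ c < d ≤ ∞. Let N_X : ((a,b) → [0,∞]) → [0,∞] be a functional that is monotone (g ≤ h pointwise implies N_X(g) ≤ N_X(h)) and positively homogeneous (N_X(λ·g) = λ·N_X(g) for every λ ∈ [0,∞]). Let f : X → ℝ and u : Y → ℝ be measurable, let t > 0 and C ≥ 0, and suppose that for every q ∈ (a,b) and every p ∈ (c,d) one has ‖u‖_{L^p(ν)} ≤ C · t^{1/p − 1/q} · ‖f‖_{L^q(μ)}. Then for every p ∈ (c,d): κ_X(t)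 · ‖u‖_{L^p(ν)} ≤ C · t^{1/p} · ⟨f⟩_X, where ⟨f⟩_X := N_X(q ↦ ‖f‖_{L^q(μ)}) and κ_X(t) := N_X(q ↦ t^{1/q}). -/
open MeasureTheory Set ENNReal

/-- Let `N_X` be a monotone and positively homogeneous functional on the
nonnegative functions defined on `(a,b)` (modelling an m.r.i. norm). If
`‖u‖_{L^p(ν)} ≤ C · t^{1/p - 1/q} · ‖f‖_{L^q(μ)}` for all `q ∈ (a,b)`, `p ∈ (c,d)`, then
for every `p ∈ (c,d)`: `κ_X(t) · ‖u‖_{L^p(ν)} ≤ C · t^{1/p} · ⟨f⟩_X`. -/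
theorem mri_pointwise_exponent_estimate
    {X Y : Type*} [MeasurableSpace X] [MeasurableSpace Y]
    (μ : Measure X) (ν : Measure Y) [SigmaFinite μ] [SigmaFinite ν]
    (a b c d : ℝ≥0∞) (ha : 1 ≤ a) (hab : a < b) (hc : 1 ≤ c) (hcd : c < d)
    (NX : (Ioo a b → ℝ≥0∞) → ℝ≥0∞)
    (hNXmono : ∀ g h : Ioo a b → ℝ≥0∞, (∀ q, g q ≤ h q) → NX g ≤ NX h)
    (hNXhom : ∀ (lam : ℝ≥0∞) (g : Ioo a b → ℝ≥0∞), NX (fun q => lam * g q) = lam * NX g)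
    (f : X → ℝ) (u : Y → ℝ) (hf : Measurable f) (hu : Measurable u)
    (t : ℝ) (ht : 0 < t) (C : ℝ) (hC : 0 ≤ C)
    (h : ∀ q ∈ Ioo a b, ∀ p ∈ Ioo c d,
      eLpNorm u p ν ≤
        ENNReal.ofReal C * ENNReal.ofReal (t ^ (1 / p.toReal - 1 / q.toReal)) *
          eLpNorm f q μ) :
    ∀ p ∈ Ioo c d,
      NX (fun q => ENNReal.ofReal (t ^ (1 / (q : ℝ≥0∞).toReal))) * eLpNorm u p ν ≤
        ENNReal.ofReal C * ENNReal.ofReal (t ^ (1 / p.toReal)) *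
          NX (fun q => eLpNorm f (q : ℝ≥0∞) μ) := by
  intro p hp
  rw [mul_comm, ← hNXhom]
  rw [show (ENNReal.ofReal C * ENNReal.ofReal (t ^ (1 / p.toReal)) *
      NX (fun q => eLpNorm f (q : ℝ≥0∞) μ)) =
      NX (fun q => ENNReal.ofReal C * ENNReal.ofReal (t ^ (1 / p.toReal)) *
        eLpNorm f (q : ℝ≥0∞) μ) by
    rw [mul_assoc, ← hNXhom, ← hNXhom]; simp [mul_assoc]]
  apply hNXmono
  intro q
  have h1 := h q q.2 p hp
  calc eLpNorm u p ν * ENNReal.ofReal (t ^ (1 / (q : ℝ≥0∞).toReal))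
      ≤ (ENNReal.ofReal C * ENNReal.ofReal (t ^ (1 / p.toReal - 1 / (q : ℝ≥0∞).toReal)) *
          eLpNorm f (q : ℝ≥0∞) μ) * ENNReal.ofReal (t ^ (1 / (q : ℝ≥0∞).toReal)) :=
        mul_le_mul_left h1 _
    _ = ENNReal.ofReal C * ENNReal.ofReal (t ^ (1 / p.toReal)) * eLpNorm f (q : ℝ≥0∞) μ := by
        rw [mul_right_comm, mul_assoc (ENNReal.ofReal C), ← ENNReal.ofReal_mul
          (Real.rpow_nonneg ht.le _), ← Real.rpow_add ht]
        ring_nf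
end

section
/- Let (X, μ) and (Y, ν) be sigma-finite measure spaces, let 1 ≤ a < b ≤ ∞ and 1 ≤ c < d ≤ ∞. Let N_X : ((a,b) → [0,∞]) → [0,∞] and N_Y : ((c,d) → [0,∞]) → [0,∞] be functionals that are monotone (g ≤ h pointwise implies N(g) ≤ N(h)) and positively homogeneous (N(λ·g) = λ·N(g) for every λ ∈ [0,∞]). Let f : X → ℝ and u : Y → ℝ be measurable, let A > 0, B > 0 and D ≥ 0, and suppose that for every q ∈ (a,b) and every p ∈ (c,d) one has ‖u‖_{L^p(ν)} ≤ D · A^{1/p} · B^{−1/q} · ‖f‖_{L^q(μ)}. Then ⟨u⟩_Y · κ_X(B) ≤ D · ⟨f⟩_X · κ_Y(A), where ⟨f⟩_X := N_X(q ↦ ‖f‖_{L^q(μ)}), ⟨u⟩_Y := N_Y(p ↦ ‖u‖_{L^p(ν)}), κ_X(B) := N_X(q ↦ B^{1/q}) and κ_Y(A) := N_Y(p ↦ A^{1/p}). -/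
open MeasureTheory Set ENNReal

/-- Let `N_X`, `N_Y` be monotone and positively homogeneous functionals
on the nonnegative functions defined on `(a,b)` resp. `(c,d)` (modelling m.r.i. norms).
If `‖u‖_{L^p(ν)} ≤ D · A^{1/p} · B^{-1/q} · ‖f‖_{L^q(μ)}` for all `q ∈ (a,b)`, `p ∈ (c,d)`,
with `A, B > 0`, `D ≥ 0`, then `⟨u⟩_Y · κ_X(B) ≤ D · ⟨f⟩_X · κ_Y(A)`. -/
theorem mri_general_source_datum_estimate
    {X Y : Type*} [MeasurableSpace X] [MeasurableSpace Y]
    (μ : Measure X) (ν : Measure Y) [SigmaFinite μ] [SigmaFinite ν]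
    (a b c d : ℝ≥0∞) (ha : 1 ≤ a) (hab : a < b) (hc : 1 ≤ c) (hcd : c < d)
    (NX : (Ioo a b → ℝ≥0∞) → ℝ≥0∞) (NY : (Ioo c d → ℝ≥0∞) → ℝ≥0∞)
    (hNXmono : ∀ g h : Ioo a b → ℝ≥0∞, (∀ q, g q ≤ h q) → NX g ≤ NX h)
    (hNYmono : ∀ g h : Ioo c d → ℝ≥0∞, (∀ p, g p ≤ h p) → NY g ≤ NY h)
    (hNXhom : ∀ (lam : ℝ≥0∞) (g : Ioo a b → ℝ≥0∞), NX (fun q => lam * g q) = lam * NX g)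
    (hNYhom : ∀ (lam : ℝ≥0∞) (g : Ioo c d → ℝ≥0∞), NY (fun p => lam * g p) = lam * NY g)
    (f : X → ℝ) (u : Y → ℝ) (hf : Measurable f) (hu : Measurable u)
    (A B : ℝ) (hA : 0 < A) (hB : 0 < B) (D : ℝ) (hD : 0 ≤ D)
    (h : ∀ q ∈ Ioo a b, ∀ p ∈ Ioo c d,
      eLpNorm u p ν ≤
        ENNReal.ofReal D * ENNReal.ofReal (A ^ (1 / p.toReal)) *
          ENNReal.ofReal (B ^ (-(1 / q.toReal))) * eLpNorm f q μ) :
    NY (fun p => eLpNorm u (p : ℝ≥0∞) ν) *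
        NX (fun q => ENNReal.ofReal (B ^ (1 / (q : ℝ≥0∞).toReal))) ≤
      ENNReal.ofReal D * NX (fun q => eLpNorm f (q : ℝ≥0∞) μ) *
        NY (fun p => ENNReal.ofReal (A ^ (1 / (p : ℝ≥0∞).toReal))) := by
  set KA := NY (fun p => ENNReal.ofReal (A ^ (1 / (p : ℝ≥0∞).toReal))) with hKA
  set U := NY (fun p => eLpNorm u (p : ℝ≥0∞) ν) with hU
  have key : ∀ q : Ioo a b,
      U * ENNReal.ofReal (B ^ (1 / (q : ℝ≥0∞).toReal)) ≤
      (ENNReal.ofReal D * KA) * eLpNorm f (q : ℝ≥0∞) μ := by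
    intro q
    have step1 : U ≤ (ENNReal.ofReal D * ENNReal.ofReal (B ^ (-(1 / (q:ℝ≥0∞).toReal))) *
        eLpNorm f (q:ℝ≥0∞) μ) * KA := by
      rw [hU, hKA, ← hNYhom]
      apply hNYmono
      intro p
      calc eLpNorm u (p:ℝ≥0∞) ν
          ≤ ENNReal.ofReal D * ENNReal.ofReal (A ^ (1 / (p:ℝ≥0∞).toReal)) *
            ENNReal.ofReal (B ^ (-(1 / (q:ℝ≥0∞).toReal))) * eLpNorm f (q:ℝ≥0∞) μ :=
          h q q.2 p p.2
        _ = _ := by ring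
    have hB1 : ENNReal.ofReal (B ^ (-(1 / (q:ℝ≥0∞).toReal))) *
        ENNReal.ofReal (B ^ (1 / (q:ℝ≥0∞).toReal)) = 1 := by
      rw [← ENNReal.ofReal_mul (by positivity), ← Real.rpow_add hB]
      simp
    calc U * ENNReal.ofReal (B ^ (1 / (q:ℝ≥0∞).toReal))
        ≤ ((ENNReal.ofReal D * ENNReal.ofReal (B ^ (-(1 / (q:ℝ≥0∞).toReal))) *
            eLpNorm f (q:ℝ≥0∞) μ) * KA) * ENNReal.ofReal (B ^ (1 / (q:ℝ≥0∞).toReal)) :=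
          mul_le_mul_left step1 _
      _ = (ENNReal.ofReal D * KA) * eLpNorm f (q:ℝ≥0∞) μ *
            (ENNReal.ofReal (B ^ (-(1 / (q:ℝ≥0∞).toReal))) *
              ENNReal.ofReal (B ^ (1 / (q:ℝ≥0∞).toReal))) := by ring
      _ = _ := by rw [hB1, mul_one]
  calc U * NX (fun q => ENNReal.ofReal (B ^ (1 / (q : ℝ≥0∞).toReal)))
      = NX (fun q => U * ENNReal.ofReal (B ^ (1 / (q : ℝ≥0∞).toReal))) := (hNXhom U _).symm
    _ ≤ NX (fun q => (ENNReal.ofReal D * KA) * eLpNorm f (q : ℝ≥0∞) μ) := hNXmono _ _ key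
    _ = (ENNReal.ofReal D * KA) * NX (fun q => eLpNorm f (q : ℝ≥0∞) μ) := hNXhom _ _
    _ = _ := by ring
end

section
/- Let (X, μ) and (Y, ν) be sigma-finite measure spaces, let 1 ≤ a < b ≤ ∞ and 1 ≤ c < d ≤ ∞, let ψ be a generating function on (a,b) and χ a generating function on (c,d). Let f : X → ℝ and u : Y → ℝ be measurable, let A > 0, B > 0 and D ≥ 0, and suppose that for every q ∈ (a,b) and every p ∈ (c,d) one has ‖u‖_{L^p(ν)} ≤ D · A^{1/p} · B^{−1/q} · ‖f‖_{L^q(μ)}. Then φ[Gψ](B) · ‖u‖_{Gχ} ≤ D · φ[Gχ](A) · ‖f‖_{Gψ}, where all suprema are taken in [0,∞]. -/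
open MeasureTheory Set ENNReal

/-- Let `ψ`, `χ` be generating functions on `(a,b)` resp. `(c,d)`
(measurable, strictly positive with positive infimum, encoded by lower bounds `εψ, εχ > 0`).
If `‖u‖_{L^p(ν)} ≤ D · A^{1/p} · B^{-1/q} · ‖f‖_{L^q(μ)}` for all `q ∈ (a,b)`, `p ∈ (c,d)`,
with `A, B > 0`, `D ≥ 0`, then `φ[Gψ](B) · ‖u‖_{Gχ} ≤ D · φ[Gχ](A) · ‖f‖_{Gψ}`,
all suprema taken in `[0,∞]`. -/
theorem grand_lebesgue_general_source_datum_estimate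
    {X Y : Type*} [MeasurableSpace X] [MeasurableSpace Y]
    (μ : Measure X) (ν : Measure Y) [SigmaFinite μ] [SigmaFinite ν]
    (a b c d : ℝ≥0∞) (ha : 1 ≤ a) (hab : a < b) (hc : 1 ≤ c) (hcd : c < d)
    (ψ χ : ℝ≥0∞ → ℝ) (hψmeas : Measurable ψ) (hχmeas : Measurable χ)
    (εψ : ℝ) (hεψ : 0 < εψ) (hψlb : ∀ q ∈ Ioo a b, εψ ≤ ψ q)
    (εχ : ℝ) (hεχ : 0 < εχ) (hχlb : ∀ p ∈ Ioo c d, εχ ≤ χ p)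
    (f : X → ℝ) (u : Y → ℝ) (hf : Measurable f) (hu : Measurable u)
    (A B : ℝ) (hA : 0 < A) (hB : 0 < B) (D : ℝ) (hD : 0 ≤ D)
    (h : ∀ q ∈ Ioo a b, ∀ p ∈ Ioo c d,
      eLpNorm u p ν ≤
        ENNReal.ofReal D * ENNReal.ofReal (A ^ (1 / p.toReal)) *
          ENNReal.ofReal (B ^ (-(1 / q.toReal))) * eLpNorm f q μ) :
    (⨆ q ∈ Ioo a b, ENNReal.ofReal (B ^ (1 / q.toReal)) / ENNReal.ofReal (ψ q)) *
        (⨆ p ∈ Ioo c d, eLpNorm u p ν / ENNReal.ofReal (χ p)) ≤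
      ENNReal.ofReal D *
        (⨆ p ∈ Ioo c d, ENNReal.ofReal (A ^ (1 / p.toReal)) / ENNReal.ofReal (χ p)) *
        (⨆ q ∈ Ioo a b, eLpNorm f q μ / ENNReal.ofReal (ψ q)) := by
  have key : ∀ q ∈ Ioo a b, ∀ p ∈ Ioo c d,
      (ENNReal.ofReal (B ^ (1 / q.toReal)) / ENNReal.ofReal (ψ q)) *
        (eLpNorm u p ν / ENNReal.ofReal (χ p)) ≤
      ENNReal.ofReal D *
        (ENNReal.ofReal (A ^ (1 / p.toReal)) / ENNReal.ofReal (χ p)) *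
        (eLpNorm f q μ / ENNReal.ofReal (ψ q)) := by
    intro q hq p hp
    have h1 := h q hq p hp
    have hBB : ENNReal.ofReal (B ^ (1 / q.toReal)) *
        ENNReal.ofReal (B ^ (-(1 / q.toReal))) = 1 := by
      rw [← ENNReal.ofReal_mul (Real.rpow_nonneg hB.le _),
        ← Real.rpow_add hB, add_neg_cancel, Real.rpow_zero, ENNReal.ofReal_one]
    simp only [div_eq_mul_inv]
    calc ENNReal.ofReal (B ^ (1 / q.toReal)) * (ENNReal.ofReal (ψ q))⁻¹ *
          (eLpNorm u p ν * (ENNReal.ofReal (χ p))⁻¹)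
        ≤ ENNReal.ofReal (B ^ (1 / q.toReal)) * (ENNReal.ofReal (ψ q))⁻¹ *
          ((ENNReal.ofReal D * ENNReal.ofReal (A ^ (1 / p.toReal)) *
            ENNReal.ofReal (B ^ (-(1 / q.toReal))) * eLpNorm f q μ) *
            (ENNReal.ofReal (χ p))⁻¹) := by
          exact mul_le_mul_right (mul_le_mul_left h1 _) _
      _ = (ENNReal.ofReal (B ^ (1 / q.toReal)) * ENNReal.ofReal (B ^ (-(1 / q.toReal)))) *
          (ENNReal.ofReal D *
            (ENNReal.ofReal (A ^ (1 / p.toReal)) * (ENNReal.ofReal (χ p))⁻¹) *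
            (eLpNorm f q μ * (ENNReal.ofReal (ψ q))⁻¹)) := by ring
      _ = ENNReal.ofReal D *
            (ENNReal.ofReal (A ^ (1 / p.toReal)) * (ENNReal.ofReal (χ p))⁻¹) *
            (eLpNorm f q μ * (ENNReal.ofReal (ψ q))⁻¹) := by rw [hBB, one_mul]
  simp only [ENNReal.iSup_mul, ENNReal.mul_iSup]
  refine iSup_le fun q => iSup_le fun hq => iSup_le fun p => iSup_le fun hp => ?_
  refine le_trans (key p hp q hq) ?_
  exact le_iSup_of_le p (le_iSup_of_le hp (le_iSup_of_le q (le_iSup_of_le hq le_rfl)))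
end
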